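/- arXiv:2603.20961 — 7 statements merged into one kernel-verified Lean document; each statement's English description precedes it below -/
import Mathlib

section
/- Let G be an abelian group and A = {a_1, ..., a_k} ⊆ G \ {0} with k ≥ 3 distinct elements. Suppose that for all distinct i, j one has a_i + a_j ∈ A ∪ {0}, and suppose A contains a non-involution element (some x with 2x ≠ 0). Then there exists a non-involution a ∈ A with -a ∈ A. -/
theorem stmt_2 {G : Type*} [AddCommGroup G] [DecidableEq G] (A : Finset G)
    (h0 : (0 : G) ∉ A) (hcard : 3 ≤ A.card)
    (hclosed : ∀ a ∈ A, ∀ b ∈ A, a ≠ b → a + b ∈ insert (0 : G) A)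
    (hnoninv : ∃ x ∈ A, x + x ≠ 0) :
    ∃ a ∈ A, a + a ≠ 0 ∧ -a ∈ A := by
  classical
  obtain ⟨x, hxA, hx2⟩ := hnoninv
  by_cases hnegx : -x ∈ A
  · exact ⟨x, hxA, hx2, hnegx⟩
  set S := A.erase x with hSdef
  have hSA : ∀ y ∈ S, y ∈ A := fun y hy => Finset.mem_of_mem_erase hy
  have hxS : x ∉ S := Finset.notMem_erase x A
  -- S is closed under adding x
  have hadd : ∀ y ∈ S, y + x ∈ S := by
    intro y hy
    obtain ⟨hyx, hyA⟩ := Finset.mem_erase.mp hy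
    rcases Finset.mem_insert.mp (hclosed y hyA x hxA hyx) with h | h
    · exact absurd ((eq_neg_of_add_eq_zero_left h) ▸ hyA) hnegx
    · refine Finset.mem_erase.mpr ⟨?_, h⟩
      intro he
      exact h0 ((add_eq_right.mp he) ▸ hyA)
  -- hence a bijection, so S closed under subtracting x
  have himg : S.image (· + x) = S := by
    apply Finset.eq_of_subset_of_card_le
    · intro z hz
      obtain ⟨y, hy, rfl⟩ := Finset.mem_image.mp hz
      exact hadd y hy
    · rw [Finset.card_image_of_injective _ (add_left_injective x)]
  have hsub : ∀ y ∈ S, y - x ∈ S := by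
    intro y hy
    rw [← himg] at hy
    obtain ⟨z, hz, hzy⟩ := Finset.mem_image.mp hy
    simpa [← hzy] using hz
  -- closure under adding integer multiples of x
  have hSz : ∀ y ∈ S, ∀ n : ℤ, y + n • x ∈ S := by
    intro y hy n
    induction n using Int.induction_on with
    | zero => simpa using hy
    | succ k ih =>
      have := hadd _ ih
      have he : y + (k : ℤ) • x + x = y + ((k : ℤ) + 1) • x := by module
      rwa [he] at this
    | pred k ih =>
      have := hsub _ ih
      have he : y + (-(k:ℤ)) • x - x = y + (-(k : ℤ) - 1) • x := by module
      rwa [he] at this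
  -- pick b ∈ S
  have hScard : 2 ≤ S.card := by
    rw [hSdef, Finset.card_erase_of_mem hxA]
    omega
  obtain ⟨b, hb⟩ : S.Nonempty := Finset.card_pos.mp (by omega)
  -- b is not in ⟨x⟩
  have hb1 : ∀ s : ℤ, b ≠ s • x := by
    intro s hs
    apply hxS
    have : b + (1 - s) • x = x := by rw [hs]; module
    exact this ▸ hSz b hb (1 - s)
  -- key inductive lemma
  have key : ∀ k : ℕ, (∀ m : ℕ, 0 < m → m ≤ k + 1 → ∀ s : ℤ, (m : ℤ) • b ≠ s • x) →
      ∀ t : ℤ, ((k : ℤ) + 1) • b + t • x ∈ S := by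
    intro k
    induction k with
    | zero =>
      intro _ t
      have := hSz b hb t
      have he : b + t • x = ((0 : ℤ) + 1) • b + t • x := by module
      rwa [he] at this
    | succ k ih =>
      intro hnd t
      have ih' := ih (fun m hm hmk s => hnd m hm (by omega) s)
      obtain ⟨j, hne⟩ : ∃ j : ℤ, b + j • x ≠ ((k : ℤ) + 1) • b + (t - j) • x := by
        by_cases hc : b + (0 : ℤ) • x = ((k : ℤ) + 1) • b + (t - 0) • x
        · refine ⟨1, fun hc2 => hx2 ?_⟩
          have h3 : b + (0:ℤ) • x - (b + (1:ℤ) • x)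
              = ((k:ℤ)+1) • b + (t - 0) • x - (((k:ℤ)+1) • b + (t - 1) • x) := by
            rw [← hc, ← hc2]
          linear_combination (norm := module) -h3
        · exact ⟨0, hc⟩
      have ha1 : b + j • x ∈ S := hSz b hb j
      have ha2 : ((k : ℤ) + 1) • b + (t - j) • x ∈ S := ih' (t - j)
      have hsum := hclosed _ (hSA _ ha1) _ (hSA _ ha2) hne
      have hsumeq : (b + j • x) + (((k:ℤ) + 1) • b + (t - j) • x)
          = ((k:ℤ) + 1 + 1) • b + t • x := by module
      rw [hsumeq] at hsum
      have hknd := hnd (k + 2) (by omega) (le_refl _)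
      rcases Finset.mem_insert.mp hsum with h | h
      · exfalso
        apply hknd (-t)
        push_cast
        linear_combination (norm := module) h
      · refine Finset.mem_erase.mpr ⟨?_, ?_⟩
        · intro he
          apply hknd (1 - t)
          push_cast
          linear_combination (norm := module) he
        · have hc2 : ((k:ℤ) + 1 + 1) = ((k + 1 : ℕ) : ℤ) + 1 := by push_cast; ring
          rwa [← hc2]
  -- existence of minimal d with d • b ∈ ⟨x⟩
  have hDne : ∃ k : ℕ, 0 < k ∧ ∃ s : ℤ, (k : ℤ) • b = s • x := by
    by_contra hD
    push_neg at hD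
    have hnd : ∀ m : ℕ, 0 < m → ∀ s : ℤ, (m : ℤ) • b ≠ s • x := fun m hm s => hD m hm s
    have hmem : ∀ k : ℕ, ((k : ℤ) + 1) • b ∈ S := by
      intro k
      have := key k (fun m hm _ s => hnd m hm s) 0
      simpa using this
    obtain ⟨k, hk, l, hl, hkl, he⟩ :=
      Finset.exists_ne_map_eq_of_card_lt_of_maps_to
        (s := Finset.range (S.card + 1)) (t := S) (by simp)
        (fun k _ => hmem k)
    rcases Nat.lt_or_ge l k with hlt | hge
    · apply hnd (k - l) (by omega) 0
      have : ((k - l : ℕ) : ℤ) = (k : ℤ) - l := by push_cast [Nat.cast_sub hlt.le]; ring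
      rw [this]
      linear_combination (norm := module) he
    · have hlt : k < l := by omega
      apply hnd (l - k) (by omega) 0
      have : ((l - k : ℕ) : ℤ) = (l : ℤ) - k := by push_cast [Nat.cast_sub hlt.le]; ring
      rw [this]
      linear_combination (norm := module) -he
  set d := Nat.find hDne with hddef
  obtain ⟨hdpos, s0, hs0⟩ := Nat.find_spec hDne
  rw [← hddef] at hdpos hs0
  have hmin : ∀ m : ℕ, 0 < m → m < d → ∀ s : ℤ, (m : ℤ) • b ≠ s • x := by
    intro m hm hmd s hs
    exact Nat.find_min hDne hmd ⟨hm, s, hs⟩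
  have hd1 : d ≠ 1 := by
    intro h
    apply hb1 s0
    rw [h] at hs0
    simpa using hs0
  have hd2 : 2 ≤ d := by omega
  rcases eq_or_lt_of_le hd2 with hdeq | hdgt
  · -- d = 2
    rw [← hdeq] at hs0
    push_cast at hs0
    by_cases h2 : s0 • x = 0
    · -- 2b = 0, use a = b + x
      have hbb : b + b = 0 := by
        have := hs0.trans h2
        rwa [two_smul] at this
      refine ⟨b + x, hSA _ (hadd b hb), ?_, ?_⟩
      · intro h
        apply hx2
        have : b + x + (b + x) = (b + b) + (x + x) := by abel
        rw [this, hbb, zero_add] at h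
        exact h
      · have heq : b + (-s0 - 1) • x = -(b + x) := by
          linear_combination (norm := module) hs0
        exact heq ▸ hSA _ (hSz b hb (-s0 - 1))
    · -- 2b = s0 x ≠ 0, use a = b
      refine ⟨b, hSA b hb, ?_, ?_⟩
      · intro h
        apply h2
        rw [← hs0, two_smul]
        exact h
      · have heq : b + (-s0) • x = -b := by
          linear_combination (norm := module) hs0
        exact heq ▸ hSA _ (hSz b hb (-s0))
  · -- d ≥ 3
    have hnd : ∀ m : ℕ, 0 < m → m ≤ (d - 2) + 1 → ∀ s : ℤ, (m : ℤ) • b ≠ s • x := by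
      intro m hm hmd s
      exact hmin m hm (by omega) s
    have hQ := key (d - 2) hnd (-s0)
    have hcast : (((d - 2 : ℕ) : ℤ) + 1) = (d : ℤ) - 1 := by
      have : ((d - 2 : ℕ) : ℤ) = (d : ℤ) - 2 := by push_cast [Nat.cast_sub (by omega : 2 ≤ d)]; ring
      rw [this]; ring
    rw [hcast] at hQ
    refine ⟨b, hSA b hb, ?_, ?_⟩
    · intro h
      apply hmin 2 (by omega) hdgt 0
      push_cast
      have : (2 : ℤ) • b = b + b := two_smul _ b
      rw [this, h]
      simp
    · have heq : ((d : ℤ) - 1) • b + (-s0) • x = -b := by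
        linear_combination (norm := module) hs0
      exact heq ▸ hSA _ hQ
end

section
/- Let G be an abelian group and A = {a_1, ..., a_k} ⊆ G \ {0} be a set of k distinct elements with k ≥ 3. Suppose a_i ∈ A is a non-involution with -a_i ∈ A, and suppose a_s + a_t ∈ A ∪ {0} for all distinct s, t. Then for every a_j ∈ A with a_j ≠ a_i and a_j ≠ -a_i, one has 2a_j ∈ A ∪ {0}. -/
theorem stmt_3 {G : Type*} [AddCommGroup G] [DecidableEq G] (A : Finset G)
    (h0 : (0 : G) ∉ A) (hcard : 3 ≤ A.card)
    (hclosed : ∀ s ∈ A, ∀ t ∈ A, s ≠ t → s + t ∈ insert (0 : G) A)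
    (ai : G) (hai : ai ∈ A) (hainv : ai + ai ≠ 0) (hnegai : -ai ∈ A) :
    ∀ aj ∈ A, aj ≠ ai → aj ≠ -ai → aj + aj ∈ insert (0 : G) A := by
  intro aj hj hji hjni
  have h1 : aj + ai ∈ A := by
    have := hclosed aj hj ai hai hji
    rcases Finset.mem_insert.mp this with h | h
    · exact absurd (add_eq_zero_iff_eq_neg.mp h) hjni
    · exact h
  have h2 : aj + -ai ∈ A := by
    have := hclosed aj hj (-ai) hnegai (by
      intro h; apply hjni; simpa using h)
    rcases Finset.mem_insert.mp this with h | h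
    · exact absurd (by rwa [← sub_eq_add_neg, sub_eq_zero] at h) hji
    · exact h
  have hne : aj + ai ≠ aj + -ai := by
    intro h
    have : ai = -ai := add_left_cancel h
    exact hainv (add_eq_zero_iff_eq_neg.mpr this)
  have := hclosed _ h1 _ h2 hne
  have heq : (aj + ai) + (aj + -ai) = aj + aj := by abel
  rwa [heq] at this
end

section
/- Let m ≥ 1 and let A = {a_1, ..., a_k} ⊆ Z_m \ {0} be a set of k distinct nonzero residues. Fix i ∈ {1, ..., k}. Then either there exists j ≠ i with a_i + a_j ∉ A ∪ {0}, or there exists s < k such that A ∪ {0} = {a_i, 0, -a_i, -2a_i, ..., -s·a_i} ∪ M, where M is a (possibly empty) union of cosets of the subgroup of Z_m generated by a_i, and if M is empty then s = k - 1. -/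
theorem stmt_5 (m : ℕ) (hm : 1 ≤ m) (k : ℕ) (A : Finset (ZMod m))
    (h0 : (0 : ZMod m) ∉ A) (hcard : A.card = k)
    (a : ZMod m) (ha : a ∈ A) :
    (∃ b ∈ A, b ≠ a ∧ a + b ∉ insert (0 : ZMod m) A) ∨
    (∃ s < k, ∃ M : Set (ZMod m),
      (∀ x ∈ M, x + a ∈ M) ∧
      insert (0 : ZMod m) (A : Set (ZMod m)) =
        ({a} ∪ (fun j : ℕ => -(j • a)) '' {j | j ≤ s}) ∪ M ∧
      (M = ∅ → s = k - 1)) := by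
  classical
  haveI : NeZero m := ⟨by omega⟩
  by_cases H : ∃ b ∈ A, b ≠ a ∧ a + b ∉ insert (0 : ZMod m) A
  · exact Or.inl H
  right
  push_neg at H
  set B : Set (ZMod m) := insert 0 ↑A with hBdef
  have memB : ∀ x : ZMod m, x ∈ B ↔ (x = 0 ∨ x ∈ A) := by
    intro x; simp [hBdef]
  have haB : a ∈ B := (memB a).2 (Or.inr ha)
  have h0B : (0 : ZMod m) ∈ B := (memB 0).2 (Or.inl rfl)
  have hk : 1 ≤ k := hcard ▸ Finset.card_pos.2 ⟨a, ha⟩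
  have step : ∀ y, y ∈ B → y ≠ a → y + a ∈ B := by
    intro y hy hne
    rcases (memB y).1 hy with rfl | hy'
    · simpa using haB
    · have h := H y hy' hne
      rw [add_comm] at h
      rw [memB]
      simpa using h
  have chain : ∀ x, x ∈ B → (∀ n : ℕ, x + n • a ≠ a) → ∀ n : ℕ, x + n • a ∈ B := by
    intro x hx hne n
    induction n with
    | zero => simpa using hx
    | succ n ih =>
        have h2 := step _ ih (hne n)
        rwa [succ_nsmul, ← add_assoc]
  set d := addOrderOf a with hd
  have hdpos : 0 < d := addOrderOf_pos a
  have hda : d • a = 0 := addOrderOf_nsmul_eq_zero a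
  have inj : ∀ i j : ℕ, i < d → j < d → i • a = j • a → i = j := by
    have key : ∀ i j : ℕ, i ≤ j → i • a = j • a → d ∣ (j - i) := by
      intro i j h hij
      have h3 : (j - i) • a + i • a = j • a := by
        rw [← add_nsmul]; congr 1; omega
      rw [hij] at h3
      have h4 : (j - i) • a = 0 := add_right_cancel (h3.trans (zero_add _).symm)
      exact hd ▸ addOrderOf_dvd_of_nsmul_eq_zero h4
    intro i j hi hj hij
    rcases le_total i j with h | h
    · have := Nat.eq_zero_of_dvd_of_lt (key i j h hij) (by omega)
      omega
    · have := Nat.eq_zero_of_dvd_of_lt (key j i h hij.symm) (by omega)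
      omega
  set M : Set (ZMod m) := {x | ∀ n : ℕ, x + n • a ∈ B} with hMdef
  have hMstep : ∀ x ∈ M, x + a ∈ M := by
    intro x hx n
    have h2 := hx (n + 1)
    rw [succ_nsmul, ← add_assoc] at h2
    rwa [add_right_comm]
  have hMsub : M ⊆ B := fun x hx => by simpa using hx 0
  -- the general "backwards chain" form lemma
  have formB : ∀ (x : ZMod m) (n i : ℕ), x + n • a = a →
      x + i • a = -((((i + 1) * (d - 1)) + n) • a) := by
    intro x n i hn
    apply eq_neg_of_add_eq_zero_left
    have e1 : x + i • a + (((i + 1) * (d - 1)) + n) • a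
        = (x + n • a) + (i + (i + 1) * (d - 1)) • a := by
      rw [add_assoc, ← add_nsmul, add_assoc, ← add_nsmul]
      congr 2
      ring
    rw [e1, hn]
    have e2 : a + (i + (i + 1) * (d - 1)) • a = ((i + (i + 1) * (d - 1)) + 1) • a := by
      rw [succ_nsmul, add_comm]
    rw [e2]
    have harith : (i + (i + 1) * (d - 1)) + 1 = d * (i + 1) := by
      have h1 : d - 1 + 1 = d := by omega
      calc (i + (i + 1) * (d - 1)) + 1 = (d - 1 + 1) * (i + 1) := by ring
        _ = d * (i + 1) := by rw [h1]
    rw [harith, mul_nsmul, hda, smul_zero]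
  by_cases hex : ∃ n : ℕ, -(n • a) ∉ B
  · -- Case B : the cyclic subgroup ⟨a⟩ is not contained in B
    set t := Nat.find hex with ht
    have htspec : -(t • a) ∉ B := Nat.find_spec hex
    have htmin : ∀ j, j < t → -(j • a) ∈ B := by
      intro j hj
      have := Nat.find_min hex hj
      simpa using this
    have ht1 : 1 ≤ t := by
      rcases Nat.eq_zero_or_pos t with h | h
      · exfalso; apply htspec; rw [h]; simpa using h0B
      · exact h
    have htd : t < d := by
      by_contra hle
      push_neg at hle
      apply htspec
      have h5 : (t : ℕ) • a = (t - d) • a := by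
        have h3 : (t - d) • a + d • a = t • a := by rw [← add_nsmul]; congr 1; omega
        rw [hda, add_zero] at h3; exact h3.symm
      rw [h5]
      exact htmin _ (by omega)
    set s := t - 1 with hs
    have mainB : ∀ x, x ∈ B → x ≠ a → (∀ j ≤ s, x ≠ -(j • a)) →
        ∀ n : ℕ, x + n • a ≠ a := by
      intro x hx hxa hximg
      by_contra hc
      push_neg at hc
      set n := Nat.find hc with hn
      have hnspec : x + n • a = a := Nat.find_spec hc
      have hn1 : 1 ≤ n := by
        rcases Nat.eq_zero_or_pos n with h | h
        · exfalso; apply hxa; rw [h] at hnspec; simpa using hnspec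
        · exact h
      have hstepchain : ∀ i, i < n → x + i • a ∈ B := by
        intro i
        induction i with
        | zero => intro _; simpa using hx
        | succ i ih =>
            intro h
            have hiB := ih (by omega)
            have hne : x + i • a ≠ a := Nat.find_min hc (by omega)
            have h2 := step _ hiB hne
            rwa [succ_nsmul, ← add_assoc]
      have hzero : x + (n - 1) • a = 0 := by
        have h3 : x + (n - 1) • a + a = a := by
          have h4 : (n - 1) • a + a = n • a := by
            rw [← succ_nsmul]; congr 1; omega
          rw [add_assoc, h4]; exact hnspec
        exact add_right_cancel (h3.trans (zero_add a).symm)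
      have hforms : ∀ j, j ≤ n - 1 → -(j • a) ∈ B := by
        intro j hj
        have hi : x + (n - 1 - j) • a ∈ B := hstepchain _ (by omega)
        have he : x + (n - 1 - j) • a = -(j • a) := by
          apply eq_neg_of_add_eq_zero_left
          rw [add_assoc, ← add_nsmul]
          have h6 : (n - 1 - j) + j = n - 1 := by omega
          rw [h6]; exact hzero
        rwa [he] at hi
      have htn : n - 1 ≤ s := by
        have h7 : n ≤ t := by
          by_contra h
          push_neg at h
          exact htspec (hforms t (by omega))
        omega
      exact hximg (n - 1) htn (eq_neg_of_add_eq_zero_left hzero)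
    have hseteq : B = ({a} ∪ (fun j : ℕ => -(j • a)) '' {j | j ≤ s}) ∪ M := by
      ext x
      simp only [Set.mem_union, Set.mem_singleton_iff, Set.mem_image, Set.mem_setOf_eq]
      constructor
      · intro hx
        by_cases hxa : x = a
        · exact Or.inl (Or.inl hxa)
        by_cases hximg : ∃ j ≤ s, x = -(j • a)
        · obtain ⟨j, hj, hje⟩ := hximg
          exact Or.inl (Or.inr ⟨j, hj, hje.symm⟩)
        · push_neg at hximg
          exact Or.inr (chain x hx (mainB x hx hxa hximg))
      · rintro ((rfl | ⟨j, hj, rfl⟩) | hM)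
        · exact haB
        · exact htmin j (by omega)
        · exact hMsub hM
    -- the finite image Finset
    set F : Finset (ZMod m) := (Finset.range (s + 1)).image (fun j : ℕ => -(j • a))
      with hF
    have hFinj : Set.InjOn (fun j : ℕ => -(j • a)) ↑(Finset.range (s + 1)) := by
      intro i hi j hj hij
      simp only [Finset.coe_range, Set.mem_Iio] at hi hj
      have := neg_inj.1 hij
      exact inj i j (by omega) (by omega) this
    have hFcard : F.card = s + 1 := by
      rw [hF, Finset.card_image_of_injOn hFinj, Finset.card_range]
    have haF : a ∉ F := by
      intro hmem
      rw [hF, Finset.mem_image] at hmem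
      obtain ⟨j, hj, hje⟩ := hmem
      rw [Finset.mem_range] at hj
      have h8 : (j + 1) • a = 0 := by
        rw [succ_nsmul, ← neg_neg (j • a), hje]
        simp
      have hdvd : d ∣ j + 1 := hd ▸ addOrderOf_dvd_of_nsmul_eq_zero h8
      have := Nat.le_of_dvd (by omega) hdvd
      omega
    have h0F : (0 : ZMod m) ∈ F := by
      rw [hF, Finset.mem_image]
      exact ⟨0, by simp, by simp⟩
    have hsub : insert a (F.erase 0) ⊆ A := by
      intro x hx
      rcases Finset.mem_insert.1 hx with rfl | hx
      · exact ha
      · obtain ⟨hx0, hxF⟩ := Finset.mem_erase.1 hx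
        rw [hF, Finset.mem_image] at hxF
        obtain ⟨j, hj, rfl⟩ := hxF
        rw [Finset.mem_range] at hj
        have hB : -(j • a) ∈ B := htmin j (by omega)
        rcases (memB _).1 hB with h | h
        · exact absurd h hx0
        · exact h
    have hslt : s < k := by
      have hc1 : (insert a (F.erase 0)).card = s + 1 := by
        rw [Finset.card_insert_of_notMem (fun h => haF (Finset.mem_of_mem_erase h)),
          Finset.card_erase_of_mem h0F, hFcard]
        omega
      have hc2 := Finset.card_le_card hsub
      rw [hc1, hcard] at hc2
      omega
    refine ⟨s, hslt, M, hMstep, hseteq, ?_⟩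
    intro hM
    have himgF : (fun j : ℕ => -(j • a)) '' {j | j ≤ s} = ↑F := by
      rw [hF, Finset.coe_image, Finset.coe_range]
      ext x
      simp [Nat.lt_succ_iff]
    have hBF : B = ↑(insert a F) := by
      rw [hseteq, hM, Set.union_empty, himgF, Finset.coe_insert, Set.singleton_union]
    have hBA : B = ↑(insert (0 : ZMod m) A) := by rw [hBdef, Finset.coe_insert]
    have hFeq : insert (0 : ZMod m) A = insert a F :=
      Finset.coe_injective (hBA ▸ hBF)
    have hcA : (insert (0 : ZMod m) A).card = k + 1 := by
      rw [Finset.card_insert_of_notMem h0, hcard]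
    have hcF : (insert a F).card = s + 2 := by
      rw [Finset.card_insert_of_notMem haF, hFcard]
    rw [hFeq, hcF] at hcA
    omega
  · -- Case A : all of ⟨a⟩ is in B
    push_neg at hex
    have haM : a ∈ M := by
      intro n
      have := formB a 0 n (by simp)
      rw [this]
      exact hex _
    have hseteq : B = ({a} ∪ (fun j : ℕ => -(j • a)) '' {j | j ≤ 0}) ∪ M := by
      have himg : (fun j : ℕ => -(j • a)) '' {j | j ≤ 0} = {0} := by
        ext x
        simp [Nat.le_zero]
      rw [himg]
      ext x
      simp only [Set.mem_union, Set.mem_singleton_iff]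
      constructor
      · intro hx
        by_cases hxa : x = a
        · exact Or.inl (Or.inl hxa)
        by_cases hx0 : x = 0
        · exact Or.inl (Or.inr hx0)
        right
        by_cases hc : ∀ n : ℕ, x + n • a ≠ a
        · exact chain x hx hc
        · push_neg at hc
          obtain ⟨n, hn⟩ := hc
          intro i
          rw [formB x n i hn]
          exact hex _
      · rintro ((rfl | rfl) | hM)
        · exact haB
        · exact h0B
        · exact hMsub hM
    refine ⟨0, hk, M, hMstep, hseteq, ?_⟩
    intro hM
    exact absurd (hM ▸ haM) (Set.notMem_empty a)
end

section
/- Let G be an abelian group and let x_1, ..., x_{k-1} be a sequencing of a set A' ⊆ G \ {0}. Suppose a_1, a_2 ∈ G \ {0} satisfy a_1 + a_2 = x_1, and the set A = {a_1, a_2, x_2, ..., x_{k-1}} has cardinality k with 0 ∉ A. Then the ordering a_2, a_1, x_2, x_3, ..., x_{k-1} of A has partial sums q_1 = a_2, q_i = p_{i-1} for i ≥ 2, where p_j are the partial sums of the sequencing of A'; hence this ordering is a sequencing of A if and only if a_2 ≠ 0 and a_2 ∉ {p_1, ..., p_{k-2}} and a_2 ≠ p_{k-1} (distinctness) — in particular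 if a_2 differs from all partial sums of A', then A is sequenceable. -/
/-- A sequencing of a finite set `A ⊆ G \ {0}`: an ordering whose partial sums
are pairwise distinct and nonzero except possibly the last. -/
def IsSequencing {G : Type*} [AddCommGroup G] [DecidableEq G]
    (A : Finset G) (l : List G) : Prop :=
  l.Nodup ∧ l.toFinset = A ∧
    (∀ i j, i < l.length → j < l.length →
      (l.take (i + 1)).sum = (l.take (j + 1)).sum → i = j) ∧
    (∀ i, i + 1 < l.length → (l.take (i + 1)).sum ≠ 0)

theorem stmt_9 {G : Type*} [AddCommGroup G] [DecidableEq G]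
    (k : ℕ) (A' A : Finset G) (l : List G) (hl : IsSequencing A' l)
    (hlen : l.length = k - 1) (hne : l ≠ [])
    (a1 a2 : G) (ha1 : a1 ≠ 0) (ha2 : a2 ≠ 0)
    (hsum : a1 + a2 = l.head hne)
    (hA : A = insert a1 (insert a2 l.tail.toFinset))
    (hAcard : A.card = k) (h0A : (0 : G) ∉ A) :
    (∀ i, 1 ≤ i → i + 1 ≤ l.length →
      ((a2 :: a1 :: l.tail).take (i + 1)).sum = (l.take i).sum) ∧
    ((∀ j, j < l.length → a2 ≠ (l.take (j + 1)).sum) →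
      IsSequencing A (a2 :: a1 :: l.tail)) := by
  obtain ⟨hnd, htf, hinj, hnz⟩ := hl
  have hcons : l.head hne :: l.tail = l := List.cons_head_tail hne
  have key : ∀ i, 1 ≤ i → ((a2 :: a1 :: l.tail).take (i + 1)).sum = (l.take i).sum := by
    intro i hi
    obtain ⟨m, rfl⟩ := Nat.exists_eq_add_of_le hi
    conv_rhs => rw [← hcons]
    simp only [Nat.add_comm 1 m, List.take_succ_cons, List.sum_cons]
    rw [← add_assoc, add_comm a2 a1, hsum]
  have hlpos : 0 < l.length := List.length_pos_iff.2 hne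
  have hlen2 : (a2 :: a1 :: l.tail).length = l.length + 1 := by
    simp [List.length_tail]; omega
  have htfA : (a2 :: a1 :: l.tail).toFinset = A := by
    rw [hA]; simp [Finset.insert_comm]
  refine ⟨fun i hi _ => key i hi, fun hsep => ?_⟩
  have hk : k = l.length + 1 := by
    have hle : A.card ≤ (a2 :: a1 :: l.tail).length := htfA ▸ List.toFinset_card_le _
    omega
  have hnd2 : (a2 :: a1 :: l.tail).Nodup := by
    rw [← Multiset.coe_nodup, ← Multiset.toFinset_card_eq_card_iff_nodup,
      Multiset.coe_card]
    show (a2 :: a1 :: l.tail).toFinset.card = (a2 :: a1 :: l.tail).length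
    rw [htfA, hAcard, hlen2, hk]
  refine ⟨hnd2, htfA, ?_, ?_⟩
  · intro i j hi hj hsum'
    rw [hlen2] at hi hj
    match i, j with
    | 0, 0 => rfl
    | 0, j + 1 =>
      have h1 : ((a2 :: a1 :: l.tail).take (0 + 1)).sum = a2 := by simp
      exact absurd (h1.symm.trans (hsum'.trans (key (j + 1) (by omega))))
        (hsep j (by omega))
    | i + 1, 0 =>
      have h1 : ((a2 :: a1 :: l.tail).take (0 + 1)).sum = a2 := by simp
      exact absurd (h1.symm.trans (hsum'.symm.trans (key (i + 1) (by omega))))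
        (hsep i (by omega))
    | i + 1, j + 1 =>
      have hs := (key (i + 1) (by omega)).symm.trans
        (hsum'.trans (key (j + 1) (by omega)))
      have : i = j := by
        rcases Nat.lt_or_ge i l.length with h | h
        · rcases Nat.lt_or_ge j l.length with h' | h'
          · exact hinj i j h h' (by simpa using hs)
          · omega
        · omega
      omega
  · intro i hi
    rw [hlen2] at hi
    match i with
    | 0 => simpa using ha2
    | i + 1 =>
      rw [key (i + 1) (by omega)]
      exact hnz i (by omega)
end

section
/- Let G be an abelian group and A = {a_1, ..., a_k} ⊆ G \ {0} a set of k distinct nonzero elements with k even, such that a_i + a_j ≠ 0 for all distinct i, j and a_i + a_j ∈ A for all distinct i, j. Then we reach a contradiction: such a set cannot exist. (Each element of A would have to be the sum of exactly (k-1)/2 distinct unordered pairs of elements of A, impossible for k even.) -/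
/-- A finset with a fixed-point-free involution has even cardinality. -/
lemma even_card_of_invol {α : Type*} [DecidableEq α] (g : α → α) :
    ∀ F : Finset α, (∀ x ∈ F, g x ∈ F) → (∀ x ∈ F, g (g x) = x) →
      (∀ x ∈ F, g x ≠ x) → Even F.card := by
  intro F
  induction F using Finset.strongInduction with
  | _ F ih =>
    intro hmap hinv hne
    rcases F.eq_empty_or_nonempty with rfl | ⟨x, hx⟩
    · simp
    have hgx : g x ∈ F := hmap x hx
    have hgxne : g x ≠ x := hne x hx
    set F' := (F.erase x).erase (g x) with hF'
    have hsub : F' ⊆ F := (Finset.erase_subset _ _).trans (Finset.erase_subset _ _)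
    have hxF' : x ∉ F' := fun h => (Finset.mem_of_mem_erase (Finset.mem_of_mem_erase h) |> fun _ =>
      (Finset.ne_of_mem_erase (Finset.mem_of_mem_erase h)) rfl)
    have hssub : F' ⊂ F := Finset.ssubset_iff_of_subset hsub |>.mpr ⟨x, hx, hxF'⟩
    have hmem' : ∀ y ∈ F', y ∈ F := fun y hy => hsub hy
    have hE : Even F'.card := by
      refine ih F' hssub ?_ ?_ ?_
      · intro y hy
        have hyF := hmem' y hy
        have hgy : g y ∈ F := hmap y hyF
        have hy1 : y ≠ g x := Finset.ne_of_mem_erase hy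
        have hy2 : y ≠ x := Finset.ne_of_mem_erase (Finset.mem_of_mem_erase hy)
        have hg1 : g y ≠ x := by
          intro h
          apply hy1
          rw [← hinv y hyF, h]
        have hg2 : g y ≠ g x := by
          intro h
          apply hy2
          rw [← hinv y hyF, h, hinv x hx]
        exact Finset.mem_erase.mpr ⟨hg2, Finset.mem_erase.mpr ⟨hg1, hgy⟩⟩
      · intro y hy; exact hinv y (hmem' y hy)
      · intro y hy; exact hne y (hmem' y hy)
    have hgxe : g x ∈ F.erase x := Finset.mem_erase.mpr ⟨hgxne, hgx⟩
    have hcard : F.card = F'.card + 2 := by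
      have h1 : (F.erase x).card = F.card - 1 := Finset.card_erase_of_mem hx
      have h2 : F'.card = (F.erase x).card - 1 := Finset.card_erase_of_mem hgxe
      have hpos : 0 < F.card := Finset.card_pos.mpr ⟨x, hx⟩
      have hpos2 : 0 < (F.erase x).card := Finset.card_pos.mpr ⟨g x, hgxe⟩
      omega
    rw [hcard]
    exact hE.add (Even.add_self 1)

theorem stmt_11 {G : Type*} [AddCommGroup G] (A : Finset G) (k : ℕ)
    (hcard : A.card = k) (hk : 0 < k) (hkeven : Even k)
    (h0 : (0 : G) ∉ A)
    (hnz : ∀ x ∈ A, ∀ y ∈ A, x ≠ y → x + y ≠ 0)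
    (hclosed : ∀ x ∈ A, ∀ y ∈ A, x ≠ y → x + y ∈ A) :
    False := by
  classical
  have hk2 : 2 ≤ k := by
    rcases hkeven with ⟨m, rfl⟩; omega
  -- fiberwise count of offDiag under the sum map
  have hfibmap : ∀ p ∈ A.offDiag, p.1 + p.2 ∈ A := by
    intro p hp
    rw [Finset.mem_offDiag] at hp
    exact hclosed p.1 hp.1 p.2 hp.2.1 hp.2.2
  have hsum : A.offDiag.card = ∑ s ∈ A, (A.offDiag.filter (fun p => p.1 + p.2 = s)).card :=
    Finset.card_eq_sum_card_fiberwise hfibmap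
  -- each fiber has card ≤ k - 2
  have hfib : ∀ s ∈ A, (A.offDiag.filter (fun p => p.1 + p.2 = s)).card ≤ k - 2 := by
    intro s hs
    set Fs := A.filter (fun x => s - x ∈ A ∧ s - x ≠ x) with hFs
    have hbij : (A.offDiag.filter (fun p => p.1 + p.2 = s)).card = Fs.card := by
      apply Finset.card_bij (fun p _ => p.1)
      · intro p hp
        rw [Finset.mem_filter, Finset.mem_offDiag] at hp
        obtain ⟨⟨h1, h2, h3⟩, h4⟩ := hp
        have h5 : s - p.1 = p.2 := by rw [← h4]; abel
        rw [hFs, Finset.mem_filter, h5]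
        exact ⟨h1, h2, fun h => h3 h.symm⟩
      · intro p hp q hq h
        rw [Finset.mem_filter, Finset.mem_offDiag] at hp hq
        have : p.2 = q.2 := by
          have := hp.2.trans hq.2.symm
          rw [h] at this
          exact add_left_cancel this
        exact Prod.ext h this
      · intro x hx
        rw [hFs, Finset.mem_filter] at hx
        obtain ⟨h1, h2, h3⟩ := hx
        refine ⟨(x, s - x), ?_, rfl⟩
        rw [Finset.mem_filter, Finset.mem_offDiag]
        refine ⟨⟨h1, h2, fun h => h3 h.symm⟩, ?_⟩
        show x + (s - x) = s
        rw [add_comm]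
        exact sub_add_cancel s x
    have heven : Even Fs.card := by
      apply even_card_of_invol (fun x => s - x)
      · intro x hx
        rw [hFs, Finset.mem_filter] at hx ⊢
        obtain ⟨h1, h2, h3⟩ := hx
        rw [sub_sub_cancel]
        exact ⟨h2, h1, fun h => h3 h.symm⟩
      · intro x _; exact sub_sub_cancel s x
      · intro x hx
        rw [hFs, Finset.mem_filter] at hx
        exact hx.2.2
    have hsubA : Fs ⊆ A.erase s := by
      intro x hx
      rw [hFs, Finset.mem_filter] at hx
      obtain ⟨h1, h2, _⟩ := hx
      refine Finset.mem_erase.mpr ⟨?_, h1⟩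
      intro h
      apply h0
      have : s - x = 0 := by rw [h]; abel
      rwa [this] at h2
    have hle : Fs.card ≤ k - 1 := by
      have := Finset.card_le_card hsubA
      rw [Finset.card_erase_of_mem hs, hcard] at this
      exact this
    have hodd : Odd (k - 1) := by
      rcases hkeven with ⟨m, rfl⟩
      exact ⟨m - 1, by omega⟩
    have hne : Fs.card ≠ k - 1 := by
      intro h
      rw [h] at heven
      exact (Nat.not_even_iff_odd.mpr hodd) heven
    omega
  have htotal : A.offDiag.card ≤ k * (k - 2) := by
    rw [hsum]
    calc ∑ s ∈ A, (A.offDiag.filter (fun p => p.1 + p.2 = s)).card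
        ≤ ∑ _s ∈ A, (k - 2) := Finset.sum_le_sum hfib
      _ = k * (k - 2) := by rw [Finset.sum_const, hcard, smul_eq_mul]
  rw [Finset.offDiag_card, hcard] at htotal
  obtain ⟨m, rfl⟩ : ∃ m, k = m + 2 := ⟨k - 2, by omega⟩
  have e1 : (m + 2) * (m + 2) = m * m + 4 * m + 4 := by ring
  have e2 : (m + 2) * (m + 2 - 2) = m * m + 2 * m := by
    rw [Nat.add_sub_cancel]; ring
  omega
end

section
/- In any abelian group G, if a subset A ⊆ G \ {0} with |A| ≥ 2 satisfies: for all distinct x, y ∈ A, x + y ∈ A ∪ {0}, and A contains some element a with -a ∈ A and 2a ≠ 0, then -b ∈ A for every b ∈ A (A is inverse-closed). -/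
theorem stmt_13 {G : Type*} [AddCommGroup G] [DecidableEq G] (A : Finset G)
    (h0 : (0 : G) ∉ A) (hcard : 2 ≤ A.card)
    (hclosed : ∀ x ∈ A, ∀ y ∈ A, x ≠ y → x + y ∈ insert (0 : G) A)
    (ha : ∃ a ∈ A, -a ∈ A ∧ a + a ≠ 0) :
    ∀ b ∈ A, -b ∈ A := by
  obtain ⟨a, haA, haA', ha2⟩ := ha
  intro b hb
  by_contra hnb
  have hba : b ≠ a := fun h => hnb (by rw [h]; exact haA')
  have hbna : b ≠ -a := fun h => hnb (by rw [h, neg_neg]; exact haA)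
  have hb0 : b ≠ 0 := fun h => h0 (h ▸ hb)
  -- adding b to a non-b element of A stays in A
  have hsum : ∀ x ∈ A, x ≠ b → x + b ∈ A := by
    intro x hx hxb
    have h := hclosed x hx b hb hxb
    rw [Finset.mem_insert] at h
    rcases h with h | h
    · exact absurd (by rw [eq_neg_of_add_eq_zero_left h] at hx; exact hx) hnb
    · exact h
  -- b + a ∈ A and b - a ∈ A
  have hbpa : b + a ∈ A := by
    have h := hclosed b hb a haA hba
    rw [Finset.mem_insert] at h
    rcases h with h | h
    · exact absurd (eq_neg_of_add_eq_zero_left h) hbna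
    · exact h
  have hbma : b + -a ∈ A := by
    have h := hclosed b hb (-a) haA' hbna
    rw [Finset.mem_insert] at h
    rcases h with h | h
    · exact absurd (by have := eq_neg_of_add_eq_zero_left h; rw [neg_neg] at this; exact this) hba
    · exact h
  have hne : b + a ≠ b + -a := by
    intro h
    exact ha2 (eq_neg_iff_add_eq_zero.mp (add_left_cancel h))
  have h2b : b + b ∈ A := by
    have h := hclosed (b + a) hbpa (b + -a) hbma hne
    have heq : (b + a) + (b + -a) = b + b := by abel
    rw [heq, Finset.mem_insert] at h
    rcases h with h | h
    · exact absurd (by rw [eq_neg_of_add_eq_zero_left h] at hb; exact hb) hnb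
    · exact h
  -- all positive multiples of b lie in A
  have key : ∀ n : ℕ, (n + 1) • b ∈ A := by
    intro n
    induction n using Nat.strong_induction_on with
    | _ n ih =>
      match n with
      | 0 => simpa using hb
      | 1 =>
        have : (2 : ℕ) • b = b + b := two_nsmul b
        rw [this]; exact h2b
      | (m + 2) =>
        have hprev : (m + 2) • b ∈ A := ih (m + 1) (by omega)
        by_cases hc : (m + 2) • b = b
        · have hz : (m + 1) • b = 0 := by
            have h1 : (m + 1) • b + b = b := by rw [← succ_nsmul]; exact hc
            exact add_eq_right.mp h1
          match m with
          | 0 =>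
            have : b = 0 := by rw [← one_nsmul b]; exact hz
            exact absurd this hb0
          | (k + 1) =>
            have hmem : (k + 1) • b ∈ A := ih k (by omega)
            have h' : (k + 1) • b + b = 0 := by rw [← succ_nsmul]; exact hz
            exact absurd (by rw [neg_eq_of_add_eq_zero_left h']; exact hmem) hnb
        · have h1 := hsum _ hprev hc
          have h2 : (m + 2) • b + b = (m + 2 + 1) • b := (succ_nsmul b (m + 2)).symm
          rw [h2] at h1
          exact h1
  -- a repetition must occur since A is finite
  have contra : ∀ p q : ℕ, p < q → (p + 1) • b = (q + 1) • b → False := by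
    intro p q hpq heq
    have hk : (q - p) • b = 0 := by
      have h1 : (p + 1) • b + (q - p) • b = (q + 1) • b := by
        rw [← add_smul]; congr 1; omega
      rw [heq] at h1
      exact add_eq_left.mp h1
    rcases Nat.lt_or_ge (q - p) 2 with h2 | h2
    · have he : q - p = 1 := by omega
      rw [he, one_nsmul] at hk
      exact hb0 hk
    · have hmem : (q - p - 1) • b ∈ A := by
        have h3 := key (q - p - 2)
        have he : q - p - 2 + 1 = q - p - 1 := by omega
        rwa [he] at h3
      have h' : (q - p - 1) • b + b = 0 := by
        rw [← succ_nsmul]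
        have he : q - p - 1 + 1 = q - p := by omega
        rw [he]; exact hk
      exact hnb (by rw [neg_eq_of_add_eq_zero_left h']; exact hmem)
  obtain ⟨m, n, hmn, h⟩ := Finite.exists_ne_map_eq_of_infinite
    (fun n : ℕ => (⟨(n + 1) • b, key n⟩ : A))
  have heq : (m + 1) • b = (n + 1) • b := congrArg Subtype.val h
  rcases lt_or_gt_of_ne hmn with hlt | hlt
  · exact contra m n hlt heq
  · exact contra n m hlt heq.symm
end

section
/- Let p > 25 be a prime and let A ⊆ Z_p \ {0} have cardinality k with 10 ≤ k ≤ 23. Then there exist two distinct elements x_1, x_2 ∈ A such that x_1 + x_2 ≠ 0 and x_1 + x_2 ∉ A \ {x_1, x_2}; equivalently A' := (A \ {x_1, x_2}) ∪ {x_1 + x_2} is a subset of Z_p \ {0} of size k - 1. -/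
theorem stmt_16 (p : ℕ) (hp : p.Prime) (hp25 : 25 < p)
    (k : ℕ) (hk : 10 ≤ k) (hk' : k ≤ 23)
    (A : Finset (ZMod p)) (h0 : (0 : ZMod p) ∉ A) (hcard : A.card = k) :
    ∃ x ∈ A, ∃ y ∈ A, x ≠ y ∧ x + y ≠ 0 ∧
      x + y ∉ A \ ({x, y} : Finset (ZMod p)) := by
  haveI : Fact p.Prime := ⟨hp⟩
  by_contra hcon
  push_neg at hcon
  have key : ∀ x ∈ A, ∀ y ∈ A, x ≠ y → x + y ≠ 0 → x + y ∈ A := by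
    intro x hx y hy hxy hs
    exact (Finset.mem_sdiff.mp (hcon x hx y hy hxy hs)).1
  have hcast : ∀ n : ℕ, 0 < n → n < p → ((n : ZMod p) ≠ 0) := by
    intro n h1 h2 h
    rw [ZMod.natCast_eq_zero_iff] at h
    exact absurd (Nat.le_of_dvd h1 h) (not_le.mpr h2)
  have hne0 : ∀ x ∈ A, x ≠ 0 := fun x hx h => h0 (h ▸ hx)
  -- no element of A has its double in A
  have doub : ∀ x ∈ A, x + x ∉ A := by
    intro x hx h2x
    have hx0 : x ≠ 0 := hne0 x hx
    have chain : ∀ j : ℕ, 1 ≤ j → j ≤ p - 1 → (j : ZMod p) * x ∈ A := by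
      intro j
      induction j with
      | zero => omega
      | succ n ih =>
        intro _ h2
        rcases Nat.lt_or_ge n 2 with hn | hn
        · interval_cases n
          · simpa using hx
          · have : ((2:ℕ) : ZMod p) * x = x + x := by push_cast; ring
            rw [this]; exact h2x
        · have hnp : n ≤ p - 1 := by omega
          have hnA : (n : ZMod p) * x ∈ A := ih (by omega) hnp
          have hxn : x ≠ (n : ZMod p) * x := by
            intro h
            have : ((n - 1 : ℕ) : ZMod p) * x = 0 := by
              have : ((n - 1 : ℕ) : ZMod p) = (n : ZMod p) - 1 := by
                push_cast [Nat.cast_sub (by omega : 1 ≤ n)]; ring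
              rw [this]; rw [sub_mul, one_mul, ← h]; ring
            rcases mul_eq_zero.mp this with h' | h'
            · exact hcast (n - 1) (by omega) (by omega) h'
            · exact hx0 h'
          have hsum : x + (n : ZMod p) * x ≠ 0 := by
            have : x + (n : ZMod p) * x = ((n + 1 : ℕ) : ZMod p) * x := by
              push_cast; ring
            rw [this]
            exact mul_ne_zero (hcast (n + 1) (by omega) (by omega)) hx0
          have := key x hx _ hnA hxn hsum
          have heq : x + (n : ZMod p) * x = ((n + 1 : ℕ) : ZMod p) * x := by
            push_cast; ring
          rwa [heq] at this
    have hsub : (Finset.Icc 1 (p - 1)).image (fun j : ℕ => (j : ZMod p) * x) ⊆ A := by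
      intro z hz
      obtain ⟨j, hj, rfl⟩ := Finset.mem_image.mp hz
      rw [Finset.mem_Icc] at hj
      exact chain j hj.1 hj.2
    have hinj : Set.InjOn (fun j : ℕ => (j : ZMod p) * x) (Finset.Icc 1 (p - 1)) := by
      intro i hi j hj hij
      simp only [Finset.coe_Icc, Set.mem_Icc] at hi hj
      have : (i : ZMod p) = (j : ZMod p) := mul_right_cancel₀ hx0 hij
      have hv := congrArg ZMod.val this
      rwa [ZMod.val_cast_of_lt (by omega), ZMod.val_cast_of_lt (by omega)] at hv
    have hcard' := Finset.card_le_card hsub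
    rw [Finset.card_image_of_injOn hinj, Nat.card_Icc] at hcard'
    omega
  -- the sum argument: pick any x ∈ A, then -(k-1) * x ∈ A
  have neg_mem : ∀ x ∈ A, x - (k : ZMod p) * x ∈ A := by
    intro x hx
    have hx0 : x ≠ 0 := hne0 x hx
    set B := insert (0 : ZMod p) A with hBdef
    have hB : B.card = k + 1 := by rw [Finset.card_insert_of_notMem h0, hcard]
    have hxB : x ∈ B := Finset.mem_insert_of_mem hx
    set T := (B.erase x).image (fun b => x + b) with hTdef
    have hinj : Set.InjOn (fun b => x + b) (B.erase x) := fun a _ b _ h =>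
      add_left_cancel h
    have hTcard : T.card = k := by
      rw [hTdef, Finset.card_image_of_injOn hinj, Finset.card_erase_of_mem hxB, hB]
      omega
    have hTB : T ⊆ B := by
      intro z hz
      obtain ⟨b, hb, rfl⟩ := Finset.mem_image.mp hz
      have hbx : b ≠ x := Finset.ne_of_mem_erase hb
      have hbB : b ∈ B := Finset.mem_of_mem_erase hb
      rcases Finset.mem_insert.mp hbB with rfl | hbA
      · simpa using hxB
      · by_cases hs : x + b = 0
        · rw [hs]; exact Finset.mem_insert_self _ _
        · exact Finset.mem_insert_of_mem (key x hx b hbA (Ne.symm hbx) hs)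
    have hsd : (B \ T).card = 1 := by
      rw [Finset.card_sdiff_of_subset hTB, hB, hTcard]; omega
    obtain ⟨c, hc⟩ := Finset.card_eq_one.mp hsd
    have hcB : c ∈ B := by
      have : c ∈ B \ T := hc ▸ Finset.mem_singleton_self c
      exact (Finset.mem_sdiff.mp this).1
    have hcT : c ∉ T := by
      have : c ∈ B \ T := hc ▸ Finset.mem_singleton_self c
      exact (Finset.mem_sdiff.mp this).2
    have hTeq : T = B.erase c := by
      apply Finset.eq_of_subset_of_card_le
      · intro z hz
        exact Finset.mem_erase.mpr ⟨fun h => hcT (h ▸ hz), hTB hz⟩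
      · rw [Finset.card_erase_of_mem hcB, hB, hTcard]
        omega
    -- compute sums
    have hsum1 : ∑ b ∈ T, b = (∑ b ∈ B, b) - c := by
      rw [hTeq, Finset.sum_erase_eq_sub hcB]
    have hsum2 : ∑ b ∈ T, b = (k : ZMod p) * x + ((∑ b ∈ B, b) - x) := by
      rw [hTdef, Finset.sum_image hinj, Finset.sum_add_distrib,
        Finset.sum_const, Finset.card_erase_of_mem hxB, hB,
        Finset.sum_erase_eq_sub hxB]
      simp [nsmul_eq_mul]
    have hc_val : c = x - (k : ZMod p) * x := by
      have := hsum1.symm.trans hsum2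
      have h' : c = (∑ b ∈ B, b) - ((k : ZMod p) * x + ((∑ b ∈ B, b) - x)) := by
        rw [← this]; ring
      rw [h']; ring
    have hc0 : c ≠ 0 := by
      rw [hc_val]
      have : x - (k : ZMod p) * x = -(((k - 1 : ℕ) : ZMod p) * x) := by
        push_cast [Nat.cast_sub (by omega : 1 ≤ k)]; ring
      rw [this]
      exact neg_ne_zero.mpr (mul_ne_zero (hcast (k - 1) (by omega) (by omega)) hx0)
    rcases Finset.mem_insert.mp hcB with rfl | hcA
    · exact absurd rfl hc0
    · rwa [← hc_val]
  -- build the chain: -(k-1-i) * x ∈ A for i ≤ k - 2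
  obtain ⟨x, hx⟩ := Finset.card_pos.mp (by omega : 0 < A.card)
  have hx0 : x ≠ 0 := hne0 x hx
  have chain : ∀ i : ℕ, i ≤ k - 2 → -(((k - 1 - i : ℕ) : ZMod p) * x) ∈ A := by
    intro i
    induction i with
    | zero =>
      intro _
      have := neg_mem x hx
      have heq : x - (k : ZMod p) * x = -(((k - 1 - 0 : ℕ) : ZMod p) * x) := by
        simp only [Nat.sub_zero]
        push_cast [Nat.cast_sub (by omega : 1 ≤ k)]; ring
      rwa [heq] at this
    | succ n ih =>
      intro hn
      have hprev := ih (by omega)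
      set m := k - 1 - n with hm
      have hm2 : 2 ≤ m := by omega
      have hmk : m ≤ k - 1 := by omega
      have hxe : x ≠ -(((m : ℕ) : ZMod p) * x) := by
        intro h
        have : ((m + 1 : ℕ) : ZMod p) * x = 0 := by
          push_cast
          linear_combination h
        rcases mul_eq_zero.mp this with h' | h'
        · exact hcast (m + 1) (by omega) (by omega) h'
        · exact hx0 h'
      have heq2 : x + -(((m : ℕ) : ZMod p) * x) = -(((m - 1 : ℕ) : ZMod p) * x) := by
        push_cast [Nat.cast_sub (by omega : 1 ≤ m)]; ring
      have hsne : x + -(((m : ℕ) : ZMod p) * x) ≠ 0 := by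
        rw [heq2]
        exact neg_ne_zero.mpr (mul_ne_zero (hcast (m - 1) (by omega) (by omega)) hx0)
      have hmem := key x hx _ hprev hxe hsne
      rw [heq2] at hmem
      have hidx : k - 1 - (n + 1) = m - 1 := by omega
      rw [hidx]
      exact hmem
  have hA1 : -(((1 : ℕ) : ZMod p) * x) ∈ A := by
    have := chain (k - 2) le_rfl
    have h1 : k - 1 - (k - 2) = 1 := by omega
    rwa [h1] at this
  have hA2 : -(((2 : ℕ) : ZMod p) * x) ∈ A := by
    have := chain (k - 3) (by omega)
    have h2 : k - 1 - (k - 3) = 2 := by omega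
    rwa [h2] at this
  have hnx : -x ∈ A := by simpa using hA1
  have := doub (-x) hnx
  apply this
  have heq : -x + -x = -(((2 : ℕ) : ZMod p) * x) := by push_cast; ring
  rw [heq]
  exact hA2
end
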